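/- The categorical correlation matrix of the Fully Exponential kernel is symmetric positive semidefinite with entries in [0,1]: if R_{r,s} = Π_{i=1}^{l} W^{(i)}_{r,s}·T^{(i)}_{r,s}, where each W^{(i)} is of the form exp(−d^{(i)}_r − d^{(i)}_s) with d^{(i)}_r ≥ 0, and each T^{(i)}_{r,s} = ε·exp(−(log ε)·P^{(i)}_{r,s}) with P^{(i)} symmetric PSD with unit diagonal and entries in [0,1] and ε ∈ (0,1), and the diagonal of R is overridden to 1 — then R is symmetric PSD with all entries in [0,1]. -/

import Mathlib

/-!
Each factor `W⁽ⁱ⁾ ∘ T⁽ⁱ⁾` is the Hadamard product of the rank-one matrix `exp (-d_r) exp (-d_s)`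
with `ε • exp (-(log ε) P⁽ⁱ⁾)` taken entrywise; the latter is PSD because the entrywise exponential
of a PSD matrix is a convergent series of nonnegative multiples of Hadamard powers, each PSD by the
Schur product theorem. Schur again makes the product over `i` PSD, and since every entry lies in
`[0, 1]`, resetting the diagonal to `1` adds a nonnegative diagonal matrix.
-/

open Finset Real
open scoped ComplexOrder Matrix

namespace Matrix

variable {ι κ 𝕜 : Type*} [RCLike 𝕜]

theorem posSemidef_of_const_one : (of fun _ _ : ι => (1 : 𝕜)).PosSemidef :=
  PosSemidef.one.submatrix (n := Unit) fun _ => ()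

theorem posSemidef_hadamard_prod {A : κ → Matrix ι ι 𝕜} (t : Finset κ)
    (hA : ∀ i ∈ t, (A i).PosSemidef) : (of fun r s => ∏ i ∈ t, A i r s).PosSemidef := by
  classical
  induction t using Finset.induction_on with
  | empty => simpa using posSemidef_of_const_one
  | insert k t hk ih =>
    convert (hA k (mem_insert_self k t)).hadamard (ih fun i hi => hA i (mem_insert_of_mem hi))
      using 1
    ext r s
    simp [prod_insert hk]

theorem PosSemidef.map_pow {A : Matrix ι ι 𝕜} (hA : A.PosSemidef) (k : ℕ) :
    (A.map (· ^ k)).PosSemidef := by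
  convert posSemidef_hadamard_prod (A := fun _ : Fin k => A) univ fun _ _ => hA using 1
  ext r s
  simp

theorem PosSemidef.of_hasSum {f : ℕ → Matrix ι ι 𝕜} {A : Matrix ι ι 𝕜} (hf : HasSum f A)
    (hpos : ∀ k, (f k).PosSemidef) : A.PosSemidef := by
  have hentry : ∀ r s, HasSum (fun k => f k r s) (A r s) := fun r s =>
    Pi.hasSum.mp (Pi.hasSum.mp hf r) s
  refine ⟨?_, fun x => ?_⟩
  · ext r s
    refine (hentry s r).star.unique ?_
    simpa only [← (hpos _).isHermitian.apply r s] using hentry r s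
  · exact HasSum.nonneg (fun k => (hpos k).2 x) <| hasSum_sum fun r _ => hasSum_sum fun s _ =>
      ((hentry r s).mul_left _).mul_right _

theorem PosSemidef.map_exp {A : Matrix ι ι ℝ} (hA : A.PosSemidef) :
    (A.map Real.exp).PosSemidef := by
  refine PosSemidef.of_hasSum (f := fun k => ((k.factorial : ℝ)⁻¹) • A.map (· ^ k)) ?_
    fun k => (hA.map_pow k).smul (by positivity)
  refine Pi.hasSum.mpr fun r => Pi.hasSum.mpr fun s => ?_
  simpa [Real.exp_eq_exp_ℝ, div_eq_inv_mul] using NormedSpace.expSeries_div_hasSum_exp (A r s)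

theorem PosSemidef.of_offDiag_eq_of_diag_le [DecidableEq ι] {A B : Matrix ι ι 𝕜}
    (hA : A.PosSemidef) (hoff : ∀ r s, r ≠ s → B r s = A r s) (hdiag : ∀ r, A r r ≤ B r r) :
    B.PosSemidef := by
  convert hA.add (PosSemidef.diagonal (d := fun r => B r r - A r r)
    fun r => sub_nonneg.mpr (hdiag r)) using 1
  ext r s
  rcases eq_or_ne r s with rfl | h
  · simp
  · simp [hoff r s h, h]

end Matrix

theorem posSemidef_fullyExponential_factor {ι : Type*} [Finite ι] {ε : ℝ} (hε0 : 0 ≤ ε)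
    (hε1 : ε ≤ 1) (d : ι → ℝ) {P : Matrix ι ι ℝ} (hP : P.PosSemidef) :
    (Matrix.of fun r s => exp (-d r - d s) * (ε * exp (-log ε * P r s))).PosSemidef := by
  have hc : 0 ≤ -log ε := neg_nonneg.mpr (log_nonpos hε0 hε1)
  have hfactor : (Matrix.of fun r s => exp (-d r - d s) * (ε * exp (-log ε * P r s))) =
      Matrix.vecMulVec (fun r => exp (-d r)) (fun r => exp (-d r)) ⊙
        (ε • ((-log ε) • P).map exp) := by
    ext r s
    simp [Matrix.vecMulVec_apply, sub_eq_add_neg, exp_add]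
  rw [hfactor]
  exact (Matrix.posSemidef_vecMulVec_self_star _).hadamard ((hP.smul hc).map_exp.smul hε0)

theorem fullyExponential_factor_mem_Icc {ε a b p : ℝ} (hε0 : 0 < ε) (hε1 : ε ≤ 1) (ha : 0 ≤ a)
    (hb : 0 ≤ b) (hp : p ≤ 1) : exp (-a - b) * (ε * exp (-log ε * p)) ∈ Set.Icc 0 1 := by
  have hexp : ε * exp (-log ε * p) = exp (log ε * (1 - p)) := by
    rw [mul_sub, mul_one, exp_sub, exp_log hε0, neg_mul, exp_neg, div_eq_mul_inv]
  rw [hexp, ← exp_add]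
  have : log ε * (1 - p) ≤ 0 := mul_nonpos_of_nonpos_of_nonneg (log_nonpos hε0.le hε1) (by linarith)
  exact ⟨(exp_pos _).le, exp_le_one_iff.mpr (by linarith)⟩

theorem FE_correlation_posSemidef_general {n l : ℕ} (ε : ℝ) (hε : ε ∈ Set.Ioo (0 : ℝ) 1)
    (d : Fin l → Fin n → ℝ) (hd : ∀ i r, 0 ≤ d i r)
    (P : Fin l → Matrix (Fin n) (Fin n) ℝ)
    (hP : ∀ i, (P i).PosSemidef)
    (hP01 : ∀ i r s, P i r s ∈ Set.Icc (0 : ℝ) 1)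
    (R : Matrix (Fin n) (Fin n) ℝ)
    (hR : ∀ r s : Fin n, R r s = if r = s then 1 else
      ∏ i, (Real.exp (-d i r - d i s) * (ε * Real.exp (-(Real.log ε) * P i r s)))) :
    R.PosSemidef ∧ ∀ r s, R r s ∈ Set.Icc (0 : ℝ) 1 := by
  obtain ⟨hε0, hε1⟩ := hε
  set M : Matrix (Fin n) (Fin n) ℝ := Matrix.of fun r s =>
    ∏ i, (exp (-d i r - d i s) * (ε * exp (-log ε * P i r s))) with hM_def
  have hM : M.PosSemidef := Matrix.posSemidef_hadamard_prod univ fun i _ =>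
    posSemidef_fullyExponential_factor hε0.le hε1.le (d i) (hP i)
  have hM01 : ∀ r s, M r s ∈ Set.Icc 0 1 := fun r s => by
    have hfac := fun i =>
      fullyExponential_factor_mem_Icc hε0 hε1.le (hd i r) (hd i s) (hP01 i r s).2
    rw [hM_def, Matrix.of_apply]
    exact ⟨prod_nonneg fun i _ => (hfac i).1,
      prod_le_one (fun i _ => (hfac i).1) fun i _ => (hfac i).2⟩
  have hR01 : ∀ r s, R r s ∈ Set.Icc 0 1 := fun r s => by
    rw [hR]
    split_ifs
    exacts [⟨zero_le_one, le_rfl⟩, hM01 r s]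
  refine ⟨hM.of_offDiag_eq_of_diag_le (fun r s hrs => ?_) (fun r => ?_), hR01⟩
  · rw [hR, if_neg hrs]
    rfl
  · rw [hR, if_pos rfl]
    exact (hM01 r r).2

/-- Theorem 1 of the paper: the categorical correlation matrix of the Fully
Exponential kernel is symmetric PSD with entries in `[0,1]`. -/
theorem FE_correlation_posSemidef {n l : ℕ} (ε : ℝ) (hε : ε ∈ Set.Ioo (0 : ℝ) 1)
    (d : Fin l → Fin n → ℝ) (hd : ∀ i r, 0 ≤ d i r)
    (P : Fin l → Matrix (Fin n) (Fin n) ℝ)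
    (hP : ∀ i, (P i).PosSemidef) (hPdiag : ∀ i r, P i r r = 1)
    (hP01 : ∀ i r s, P i r s ∈ Set.Icc (0 : ℝ) 1)
    (R : Matrix (Fin n) (Fin n) ℝ)
    (hR : ∀ r s : Fin n, R r s = if r = s then 1 else
      ∏ i, (Real.exp (-d i r - d i s) * (ε * Real.exp (-(Real.log ε) * P i r s)))) :
    R.PosSemidef ∧ ∀ r s, R r s ∈ Set.Icc (0 : ℝ) 1 :=
  FE_correlation_posSemidef_general ε hε d hd P hP hP01 R hR
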